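/- Suppose for every pair of dyadic cubes $I\in\mathcal{D}^\mu$, $J\in\mathcal{D}^\nu$ with $\ell(I)=2^{-n}\ell(J)$ for some $n\ge0$, a bilinear form satisfies $|B(\Delta_I^\mu f,\Delta_J^\nu g)| \le A\,2^{-n\epsilon/2}\frac{\ell(J)^{\epsilon}}{(\operatorname{dist}(I,J)+\ell(J))^{d+\epsilon}}\mu(I)^{1/2}\nu(J)^{1/2}\|\Delta_I^\mu f\|_{L^2(\mu)}\|\Delta_J^\nu g\|_{L^2(\nu)}$, and suppose the kernel operators $\varphi\mapsto\int K_y(t,s)\varphi(t)d\mu(t)$, $K_y(t,s)=y^\epsilon/(y+|t-s|)^{d+\epsilon}$, are bounded $L^2(\mu)\to L^2(\nu)$ with norm $\le N$ uniformly in $y>0$. Then $\sum_{I,J:\,\ell(I)\le\ell(J)} |B(\Delta_I^\mu f,\Delta_J^\nu g)| \le c(A,\epsilon)\,N\,\|f\|_{L^2(\mu)}\|g\|_{L^2(\nu)}$ for all $f\in L^2(\mu)$, $g\in L^2(\nu)$. -/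

import Mathlib

/-!
Group the pairs `(I, J)` with `ℓ(I) ≤ ℓ(J)` by the scale ratio `2^{-n}` and the scale
`ℓ(J) = 2^k`. For `t ∈ I`, `s ∈ J` one has `ℓ(J) + |t - s| ≤ 3 (dist(I, J) + ℓ(J))`, so the weight
`ℓ(J)^ε / (dist(I, J) + ℓ(J))^{d+ε}` is at most `3^{d+ε} K_{ℓ(J)}(t, s)`. Hence the slice `(n, k)`
is dominated by `3^{d+ε} ∫∫ K_{2^k}(t, s) φ(t) ψ(s) dμ(t) dν(s)` for the step functions
`φ = ∑_I a_I μ(I)^{-1/2} χ_I` and `ψ = ∑_J b_J ν(J)^{-1/2} χ_J`, whose `L²` norms are at most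
`(∑_I a_I²)^{1/2}` and `(∑_J b_J²)^{1/2}`; the kernel bound `N` controls each slice, and
Cauchy–Schwarz in `k` and the geometric series `∑_n 2^{-nε/2}` finish the proof.
-/

open MeasureTheory Set
open scoped ENNReal
noncomputable section

/-- Points of `ℝ^d`. -/
abbrev Rd (d : ℕ) := Fin d → ℝ

/-- The half-open axis-parallel cube with lower-left corner `a` and side length `ℓ`. -/
def hcube {d : ℕ} (a : Rd d) (ℓ : ℝ) : Set (Rd d) := {x | ∀ i, a i ≤ x i ∧ x i < a i + ℓ}

/-- The (half-open) dyadic cube `∏ [k_i 2^n, (k_i+1) 2^n)`. -/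
def dyC {d : ℕ} (n : ℤ) (k : Fin d → ℤ) : Set (Rd d) :=
  hcube (fun i => (k i : ℝ) * 2 ^ n) ((2 : ℝ) ^ n)

/-- Distance between two sets: `inf { dist x y : x ∈ s, y ∈ t }`. -/
def setDist {X : Type*} [PseudoMetricSpace X] (s t : Set X) : ℝ :=
  sInf ((fun p : X × X => dist p.1 p.2) '' s ×ˢ t)

section DyadicCubes

variable {d : ℕ}

theorem mem_dyC_iff_floor {n : ℤ} {k : Fin d → ℤ} {x : Rd d} :
    x ∈ dyC n k ↔ ∀ i, ⌊x i / 2 ^ n⌋ = k i := by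
  have h : (0 : ℝ) < 2 ^ n := by positivity
  simp only [dyC, hcube, mem_ofPred_eq, Int.floor_eq_iff, le_div_iff₀ h, div_lt_iff₀ h, add_mul,
    one_mul]

theorem mem_dyC_floor (n : ℤ) (x : Rd d) : x ∈ dyC n (fun i => ⌊x i / 2 ^ n⌋) :=
  mem_dyC_iff_floor.2 fun _ => rfl

theorem eq_of_mem_dyC {n : ℤ} {k k' : Fin d → ℤ} {x : Rd d} (h : x ∈ dyC n k)
    (h' : x ∈ dyC n k') : k = k' :=
  funext fun i => (mem_dyC_iff_floor.1 h i).symm.trans (mem_dyC_iff_floor.1 h' i)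

theorem dyC_subset_Icc (n : ℤ) (k : Fin d → ℤ) :
    dyC n k ⊆ Icc (fun i => (k i : ℝ) * 2 ^ n) (fun i => (k i : ℝ) * 2 ^ n + 2 ^ n) :=
  fun _ hx => ⟨fun i => (hx i).1, fun i => (hx i).2.le⟩

theorem dyC_eq_pi (n : ℤ) (k : Fin d → ℤ) :
    dyC n k = univ.pi fun i => Ico ((k i : ℝ) * 2 ^ n) ((k i : ℝ) * 2 ^ n + 2 ^ n) := by
  ext; simp [dyC, hcube]

theorem measurableSet_dyC (n : ℤ) (k : Fin d → ℤ) : MeasurableSet (dyC n k) := by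
  rw [dyC_eq_pi]
  exact .univ_pi fun _ => measurableSet_Ico

theorem measure_dyC_lt_top (μ : Measure (Rd d)) [IsLocallyFiniteMeasure μ] (n : ℤ)
    (k : Fin d → ℤ) : μ (dyC n k) < ∞ :=
  (measure_mono (dyC_subset_Icc n k)).trans_lt isCompact_Icc.measure_lt_top

theorem dist_le_of_mem_dyC {n : ℤ} {k : Fin d → ℤ} {x y : Rd d} (hx : x ∈ dyC n k)
    (hy : y ∈ dyC n k) : dist x y ≤ 2 ^ n := by
  refine (dist_pi_le_iff (by positivity)).2 fun i => ?_
  rw [Real.dist_eq, abs_le]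
  constructor <;> linarith [hx i, hy i]

end DyadicCubes

section SetDist

variable {X : Type*} [PseudoMetricSpace X]

theorem setDist_nonneg (s t : Set X) : 0 ≤ setDist s t :=
  Real.sInf_nonneg <| by rintro _ ⟨p, -, rfl⟩; exact dist_nonneg

theorem exists_dist_lt_setDist_add {s t : Set X} (hs : s.Nonempty) (ht : t.Nonempty) {δ : ℝ}
    (hδ : 0 < δ) : ∃ x ∈ s, ∃ y ∈ t, dist x y < setDist s t + δ := by
  obtain ⟨_, ⟨p, ⟨hp₁, hp₂⟩, rfl⟩, hp⟩ := Real.lt_sInf_add_pos ((hs.prod ht).image _) hδ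
  exact ⟨p.1, hp₁, p.2, hp₂, hp⟩

theorem dist_le_add_setDist_add {s t : Set X} {r r' : ℝ}
    (hs : ∀ x ∈ s, ∀ x' ∈ s, dist x x' ≤ r) (ht : ∀ y ∈ t, ∀ y' ∈ t, dist y y' ≤ r')
    {x y : X} (hx : x ∈ s) (hy : y ∈ t) : dist x y ≤ r + setDist s t + r' := by
  refine le_of_forall_pos_le_add fun δ hδ => ?_
  obtain ⟨x₀, hx₀, y₀, hy₀, h⟩ := exists_dist_lt_setDist_add ⟨x, hx⟩ ⟨y, hy⟩ hδ
  linarith [dist_triangle4 x x₀ y₀ y, hs x hx x₀ hx₀, ht y₀ hy₀ y hy]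

end SetDist

theorem ENNReal.mul_eq_sq_mul_div {w : ℝ≥0∞} (hw : w ≠ ∞) (x : ℝ≥0∞) : w * x = w ^ 2 * (x / w) := by
  rcases eq_or_ne w 0 with rfl | h0
  · simp
  · rw [sq, mul_assoc, ENNReal.mul_div_cancel h0 hw]

theorem ENNReal.rpow_half_sq (v : ℝ≥0∞) : (v ^ (1 / 2 : ℝ)) ^ 2 = v := by
  rw [← ENNReal.rpow_natCast, ← ENNReal.rpow_mul]
  norm_num

theorem div_rpow_le_rpow_mul_div_rpow {x u v c p : ℝ} (hx : 0 ≤ x) (hu : 0 < u) (hv : 0 < v)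
    (hp : 0 ≤ p) (huv : u ≤ c * v) : x / v ^ p ≤ c ^ p * (x / u ^ p) := by
  have hc : 0 < c := pos_of_mul_pos_left (hu.trans_le huv) hv.le
  calc x / v ^ p = c ^ p * (x / (c * v) ^ p) := by
        rw [Real.mul_rpow hc.le hv.le]; field_simp
    _ ≤ c ^ p * (x / u ^ p) := by gcongr

def poissonTypeKernel (d : ℕ) (ε y : ℝ) (t s : Rd d) : ℝ≥0∞ :=
  ENNReal.ofReal (y ^ ε / (y + ‖t - s‖) ^ ((d : ℝ) + ε))

section PoissonTypeKernel

variable {d : ℕ} {ε : ℝ}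

theorem measurable_poissonTypeKernel (y : ℝ) :
    Measurable (Function.uncurry (poissonTypeKernel d ε y)) := by
  unfold poissonTypeKernel Function.uncurry
  fun_prop

theorem measurable_setLIntegral_poissonTypeKernel (y : ℝ) (μ : Measure (Rd d)) [SFinite μ]
    (I : Set (Rd d)) : Measurable fun s => ∫⁻ t in I, poissonTypeKernel d ε y t s ∂μ :=
  ((measurable_poissonTypeKernel y).comp measurable_swap).lintegral_prod_right'

theorem ofReal_div_setDist_le_poissonTypeKernel (hε : 0 ≤ ε) {j k : ℤ} (hjk : j ≤ k)
    {m m' : Fin d → ℤ} {t s : Rd d} (ht : t ∈ dyC j m) (hs : s ∈ dyC k m') :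
    ENNReal.ofReal (((2 : ℝ) ^ k) ^ ε / (setDist (dyC j m) (dyC k m') + 2 ^ k) ^ ((d : ℝ) + ε))
      ≤ ENNReal.ofReal (3 ^ ((d : ℝ) + ε)) * poissonTypeKernel d ε (2 ^ k) t s := by
  have hD := setDist_nonneg (dyC j m) (dyC k m')
  have hjk' : (2 : ℝ) ^ j ≤ 2 ^ k := zpow_le_zpow_right₀ (by norm_num) hjk
  have hts : ‖t - s‖ ≤ 2 ^ j + setDist (dyC j m) (dyC k m') + 2 ^ k := by
    rw [← dist_eq_norm]
    exact dist_le_add_setDist_add (fun _ h _ h' => dist_le_of_mem_dyC h h')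
      (fun _ h _ h' => dist_le_of_mem_dyC h h') ht hs
  rw [poissonTypeKernel, ← ENNReal.ofReal_mul (by positivity)]
  exact ENNReal.ofReal_le_ofReal <| div_rpow_le_rpow_mul_div_rpow (by positivity) (by positivity)
    (by positivity) (by positivity) (by linarith)

theorem ofReal_div_setDist_mul_measure_mul_measure_le (hε : 0 ≤ ε) (μ ν : Measure (Rd d))
    {j k : ℤ} (hjk : j ≤ k) (m m' : Fin d → ℤ) :
    ENNReal.ofReal (((2 : ℝ) ^ k) ^ ε / (setDist (dyC j m) (dyC k m') + 2 ^ k) ^ ((d : ℝ) + ε))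
        * μ (dyC j m) * ν (dyC k m')
      ≤ ENNReal.ofReal (3 ^ ((d : ℝ) + ε))
        * ∫⁻ s in dyC k m', ∫⁻ t in dyC j m, poissonTypeKernel d ε (2 ^ k) t s ∂μ ∂ν := by
  rw [← setLIntegral_const, ← setLIntegral_const]
  calc _ ≤ ∫⁻ s in dyC k m', ∫⁻ t in dyC j m,
          ENNReal.ofReal (3 ^ ((d : ℝ) + ε)) * poissonTypeKernel d ε (2 ^ k) t s ∂μ ∂ν :=
        setLIntegral_mono' (measurableSet_dyC _ _) fun s hs =>
          setLIntegral_mono' (measurableSet_dyC _ _) fun t ht =>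
            ofReal_div_setDist_le_poissonTypeKernel hε hjk ht hs
    _ = _ := by simp only [lintegral_const_mul' _ _ ENNReal.ofReal_ne_top]

end PoissonTypeKernel

def dyadicStepFn {d : ℕ} (j : ℤ) (c : (Fin d → ℤ) → ℝ≥0∞) (t : Rd d) : ℝ≥0∞ :=
  ∑' m, (dyC j m).indicator (fun _ => c m) t

section DyadicStepFn

variable {d : ℕ} {j : ℤ}

theorem dyadicStepFn_of_mem (c : (Fin d → ℤ) → ℝ≥0∞) {m : Fin d → ℤ} {t : Rd d}
    (ht : t ∈ dyC j m) : dyadicStepFn j c t = c m := by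
  rw [dyadicStepFn, tsum_eq_single m fun m' hm' =>
    indicator_of_notMem (fun h => hm' (eq_of_mem_dyC h ht)) _, indicator_of_mem ht]

theorem measurable_dyadicStepFn (c : (Fin d → ℤ) → ℝ≥0∞) : Measurable (dyadicStepFn j c) :=
  .tsum fun _ => measurable_const.indicator (measurableSet_dyC _ _)

theorem lintegral_mul_dyadicStepFn (μ : Measure (Rd d)) (c : (Fin d → ℤ) → ℝ≥0∞)
    {F : Rd d → ℝ≥0∞} (hF : Measurable F) :
    ∫⁻ t, F t * dyadicStepFn j c t ∂μ = ∑' m, (∫⁻ t in dyC j m, F t ∂μ) * c m := by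
  simp_rw [dyadicStepFn, ← ENNReal.tsum_mul_left, ← indicator_mul_right]
  rw [lintegral_tsum fun m => ((hF.mul_const _).indicator (measurableSet_dyC _ _)).aemeasurable]
  simp_rw [lintegral_indicator (measurableSet_dyC _ _), lintegral_mul_const _ hF]

theorem lintegral_dyadicStepFn_sq (μ : Measure (Rd d)) (c : (Fin d → ℤ) → ℝ≥0∞) :
    ∫⁻ t, dyadicStepFn j c t ^ 2 ∂μ = ∑' m, μ (dyC j m) * c m ^ 2 := by
  have hsq : ∀ t, dyadicStepFn j c t ^ 2 = 1 * dyadicStepFn j (c ^ 2) t := fun t => by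
    rw [one_mul, dyadicStepFn_of_mem _ (mem_dyC_floor j t),
      dyadicStepFn_of_mem _ (mem_dyC_floor j t), Pi.pow_apply]
  simp_rw [hsq, lintegral_mul_dyadicStepFn μ _ measurable_const, setLIntegral_one, Pi.pow_apply]

theorem lintegral_dyadicStepFn_div_sq_le (μ : Measure (Rd d)) (a : (Fin d → ℤ) → ℝ≥0∞) :
    ∫⁻ t, dyadicStepFn j (fun m => a m / μ (dyC j m) ^ (1 / 2 : ℝ)) t ^ 2 ∂μ ≤ ∑' m, a m ^ 2 := by
  rw [lintegral_dyadicStepFn_sq]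
  refine ENNReal.tsum_le_tsum fun m => ?_
  calc _ = (μ (dyC j m) ^ (1 / 2 : ℝ) * (a m / μ (dyC j m) ^ (1 / 2 : ℝ))) ^ 2 := by
        rw [mul_pow, ENNReal.rpow_half_sq]
    _ ≤ a m ^ 2 := by gcongr; exact ENNReal.mul_div_le

end DyadicStepFn

section SliceBound

variable {d : ℕ} {ε : ℝ}

theorem lintegral_poissonTypeKernel_dyadicStepFn (μ ν : Measure (Rd d)) [SFinite μ] (y : ℝ)
    (j k : ℤ) (c c' : (Fin d → ℤ) → ℝ≥0∞) :
    ∫⁻ s, (∫⁻ t, poissonTypeKernel d ε y t s * dyadicStepFn j c t ∂μ) * dyadicStepFn k c' s ∂ν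
      = ∑' m, ∑' m', (∫⁻ s in dyC k m', ∫⁻ t in dyC j m, poissonTypeKernel d ε y t s ∂μ ∂ν)
          * c m * c' m' := by
  have hT := measurable_setLIntegral_poissonTypeKernel (ε := ε) y μ
  simp_rw [lintegral_mul_dyadicStepFn μ c (measurable_poissonTypeKernel y).of_uncurry_right]
  rw [lintegral_mul_dyadicStepFn ν c' (.tsum fun m => (hT _).mul_const _), ENNReal.tsum_comm]
  simp_rw [lintegral_tsum fun m => ((hT _).mul_const _).aemeasurable, lintegral_mul_const _ (hT _),
    ENNReal.tsum_mul_right]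

theorem tsum_tsum_ofReal_div_setDist_mul_le (hε : 0 ≤ ε) (μ ν : Measure (Rd d))
    [IsLocallyFiniteMeasure μ] [IsLocallyFiniteMeasure ν] {N : ℝ≥0∞} {j k : ℤ} (hjk : j ≤ k)
    (hK : ∀ φ ψ : Rd d → ℝ≥0∞, Measurable φ → Measurable ψ →
      ∫⁻ s, (∫⁻ t, poissonTypeKernel d ε (2 ^ k) t s * φ t ∂μ) * ψ s ∂ν
        ≤ N * (∫⁻ t, φ t ^ 2 ∂μ) ^ (1 / 2 : ℝ) * (∫⁻ s, ψ s ^ 2 ∂ν) ^ (1 / 2 : ℝ))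
    (a b : (Fin d → ℤ) → ℝ≥0∞) :
    ∑' m, ∑' m', ENNReal.ofReal (((2 : ℝ) ^ k) ^ ε
          / (setDist (dyC j m) (dyC k m') + 2 ^ k) ^ ((d : ℝ) + ε))
        * μ (dyC j m) ^ (1 / 2 : ℝ) * ν (dyC k m') ^ (1 / 2 : ℝ) * a m * b m'
      ≤ ENNReal.ofReal (3 ^ ((d : ℝ) + ε)) * N
        * (∑' m, a m ^ 2) ^ (1 / 2 : ℝ) * (∑' m', b m' ^ 2) ^ (1 / 2 : ℝ) := by
  set c := fun m => a m / μ (dyC j m) ^ (1 / 2 : ℝ)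
  set c' := fun m' => b m' / ν (dyC k m') ^ (1 / 2 : ℝ)
  have hpair : ∀ m m', ENNReal.ofReal (((2 : ℝ) ^ k) ^ ε
          / (setDist (dyC j m) (dyC k m') + 2 ^ k) ^ ((d : ℝ) + ε))
        * μ (dyC j m) ^ (1 / 2 : ℝ) * ν (dyC k m') ^ (1 / 2 : ℝ) * a m * b m'
      ≤ ENNReal.ofReal (3 ^ ((d : ℝ) + ε)) * ((∫⁻ s in dyC k m', ∫⁻ t in dyC j m,
          poissonTypeKernel d ε (2 ^ k) t s ∂μ ∂ν) * c m * c' m') := fun m m' => by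
    have hμ : μ (dyC j m) ^ (1 / 2 : ℝ) * a m = μ (dyC j m) * c m := by
      rw [ENNReal.mul_eq_sq_mul_div (ENNReal.rpow_ne_top_of_nonneg (by norm_num)
        (measure_dyC_lt_top μ j m).ne), ENNReal.rpow_half_sq]
    have hν : ν (dyC k m') ^ (1 / 2 : ℝ) * b m' = ν (dyC k m') * c' m' := by
      rw [ENNReal.mul_eq_sq_mul_div (ENNReal.rpow_ne_top_of_nonneg (by norm_num)
        (measure_dyC_lt_top ν k m').ne), ENNReal.rpow_half_sq]
    have hW := ofReal_div_setDist_mul_measure_mul_measure_le hε μ ν hjk m m'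
    set W := ENNReal.ofReal (((2 : ℝ) ^ k) ^ ε
      / (setDist (dyC j m) (dyC k m') + 2 ^ k) ^ ((d : ℝ) + ε))
    set T := ∫⁻ s in dyC k m', ∫⁻ t in dyC j m, poissonTypeKernel d ε (2 ^ k) t s ∂μ ∂ν
    calc _ = W * (μ (dyC j m) ^ (1 / 2 : ℝ) * a m) * (ν (dyC k m') ^ (1 / 2 : ℝ) * b m') := by
          ring
      _ = c m * c' m' * (W * μ (dyC j m) * ν (dyC k m')) := by rw [hμ, hν]; ring
      _ ≤ c m * c' m' * (ENNReal.ofReal (3 ^ ((d : ℝ) + ε)) * T) := by gcongr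
      _ = _ := by ring
  calc _ ≤ ∑' m, ∑' m', ENNReal.ofReal (3 ^ ((d : ℝ) + ε)) * ((∫⁻ s in dyC k m', ∫⁻ t in dyC j m,
          poissonTypeKernel d ε (2 ^ k) t s ∂μ ∂ν) * c m * c' m') :=
        ENNReal.tsum_le_tsum fun m => ENNReal.tsum_le_tsum fun m' => hpair m m'
    _ = ENNReal.ofReal (3 ^ ((d : ℝ) + ε)) * ∫⁻ s, (∫⁻ t, poissonTypeKernel d ε (2 ^ k) t s
          * dyadicStepFn j c t ∂μ) * dyadicStepFn k c' s ∂ν := by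
        rw [lintegral_poissonTypeKernel_dyadicStepFn]; simp_rw [ENNReal.tsum_mul_left]
    _ ≤ ENNReal.ofReal (3 ^ ((d : ℝ) + ε)) * (N * (∫⁻ t, dyadicStepFn j c t ^ 2 ∂μ) ^ (1 / 2 : ℝ)
          * (∫⁻ s, dyadicStepFn k c' s ^ 2 ∂ν) ^ (1 / 2 : ℝ)) := by
        gcongr
        exact hK _ _ (measurable_dyadicStepFn c) (measurable_dyadicStepFn c')
    _ ≤ _ := by
        rw [← mul_assoc, ← mul_assoc]
        gcongr
        · exact lintegral_dyadicStepFn_div_sq_le μ a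
        · exact lintegral_dyadicStepFn_div_sq_le ν b

end SliceBound

theorem ENNReal.tsum_rpow_half_mul_rpow_half_le {ι : Type*} (f g : ι → ℝ≥0∞) :
    ∑' i, f i ^ (1 / 2 : ℝ) * g i ^ (1 / 2 : ℝ)
      ≤ (∑' i, f i) ^ (1 / 2 : ℝ) * (∑' i, g i) ^ (1 / 2 : ℝ) := by
  refine ENNReal.summable.tsum_le_of_sum_le fun s => ?_
  have hsq : ∀ x : ℝ≥0∞, (x ^ (1 / 2 : ℝ)) ^ (2 : ℝ) = x := fun x => by
    rw [← ENNReal.rpow_mul]; norm_num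
  have := ENNReal.inner_le_Lp_mul_Lq s (fun i => f i ^ (1 / 2 : ℝ)) (fun i => g i ^ (1 / 2 : ℝ))
    .two_two
  simp only [hsq] at this
  refine this.trans ?_
  gcongr <;> exact ENNReal.sum_le_tsum s

def subtypeFstLeEquiv (X : Type*) :
    ℕ × ℤ × X × X ≃ {pq : (ℤ × X) × (ℤ × X) // pq.1.1 ≤ pq.2.1} where
  toFun x := ⟨((x.2.1 - x.1, x.2.2.1), (x.2.1, x.2.2.2)), by simp⟩
  invFun pq := ((pq.1.2.1 - pq.1.1.1).toNat, pq.1.2.1, pq.1.1.2, pq.1.2.2)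
  left_inv := fun ⟨n, k, x, y⟩ => by simp
  right_inv := fun ⟨⟨⟨j, x⟩, ⟨k, y⟩⟩, h⟩ => by
    simp only at h
    simp only [Subtype.mk.injEq, Prod.mk.injEq, and_true]
    omega

theorem tsum_subtype_fst_le_eq {X : Type*} (f : ℤ × X → ℤ × X → ℝ≥0∞) :
    ∑' pq : {pq : (ℤ × X) × (ℤ × X) // pq.1.1 ≤ pq.2.1}, f pq.1.1 pq.1.2
      = ∑' (n : ℕ) (k : ℤ) (x : X) (y : X), f (k - n, x) (k, y) := by
  rw [← (subtypeFstLeEquiv X).tsum_eq]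
  simp only [ENNReal.tsum_prod']
  rfl

theorem tsum_tsum_le_of_le_geometric (F : ℕ → ℤ → ℝ≥0∞) (α β : ℤ → ℝ≥0∞) {C r : ℝ≥0∞}
    (hF : ∀ n k, F n k ≤ C * r ^ n * α (k - n) ^ (1 / 2 : ℝ) * β k ^ (1 / 2 : ℝ)) :
    ∑' (n : ℕ) (k : ℤ), F n k
      ≤ C * (1 - r)⁻¹ * (∑' k, α k) ^ (1 / 2 : ℝ) * (∑' k, β k) ^ (1 / 2 : ℝ) := by
  calc ∑' (n : ℕ) (k : ℤ), F n k
      ≤ ∑' n : ℕ, C * r ^ n * ∑' k, α (k - n) ^ (1 / 2 : ℝ) * β k ^ (1 / 2 : ℝ) := by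
        gcongr with n
        rw [← ENNReal.tsum_mul_left]
        gcongr with k
        rw [← mul_assoc]
        exact hF n k
    _ ≤ ∑' n : ℕ, C * r ^ n * ((∑' k, α k) ^ (1 / 2 : ℝ) * (∑' k, β k) ^ (1 / 2 : ℝ)) := by
        gcongr with n
        refine (ENNReal.tsum_rpow_half_mul_rpow_half_le _ _).trans_eq ?_
        rw [← (Equiv.subRight (n : ℤ)).tsum_eq α]
        rfl
    _ = _ := by
        rw [ENNReal.tsum_mul_right, ENNReal.tsum_mul_left, ENNReal.tsum_geometric]
        ring

theorem two_zpow_sub_sub_rpow (k : ℤ) (n : ℕ) (s : ℝ) :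
    ((2 : ℝ) ^ (k - n - k)) ^ s = ((2 : ℝ) ^ (-s)) ^ n := by
  rw [sub_sub_cancel_left, ← Real.rpow_intCast, ← Real.rpow_mul (by norm_num),
    ← Real.rpow_natCast, ← Real.rpow_mul (by norm_num)]
  push_cast
  ring_nf

theorem tsum_tsum_le_of_pair_bound {d : ℕ} {ε A : ℝ} (hε : 0 ≤ ε) (hA : 0 ≤ A)
    (μ ν : Measure (Rd d)) [IsLocallyFiniteMeasure μ] [IsLocallyFiniteMeasure ν]
    {N : ℝ≥0∞} {a b : ℤ × (Fin d → ℤ) → ℝ≥0∞} {B : ℤ × (Fin d → ℤ) → ℤ × (Fin d → ℤ) → ℝ≥0∞}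
    (hB : ∀ p q : ℤ × (Fin d → ℤ), p.1 ≤ q.1 →
      B p q ≤ ENNReal.ofReal (A * ((2 : ℝ) ^ (p.1 - q.1)) ^ (ε / 2)
          * (((2 : ℝ) ^ q.1) ^ ε
            / (setDist (dyC p.1 p.2) (dyC q.1 q.2) + (2 : ℝ) ^ q.1) ^ ((d : ℝ) + ε)))
        * μ (dyC p.1 p.2) ^ (1 / 2 : ℝ) * ν (dyC q.1 q.2) ^ (1 / 2 : ℝ) * a p * b q)
    (hK : ∀ y : ℝ, 0 < y → ∀ φ ψ : Rd d → ℝ≥0∞, Measurable φ → Measurable ψ →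
      ∫⁻ s, (∫⁻ t, poissonTypeKernel d ε y t s * φ t ∂μ) * ψ s ∂ν
        ≤ N * (∫⁻ t, φ t ^ 2 ∂μ) ^ (1 / 2 : ℝ) * (∫⁻ s, ψ s ^ 2 ∂ν) ^ (1 / 2 : ℝ))
    (n : ℕ) (k : ℤ) :
    ∑' x, ∑' y, B (k - n, x) (k, y)
      ≤ ENNReal.ofReal (A * 3 ^ ((d : ℝ) + ε)) * N * ENNReal.ofReal (2 ^ (-(ε / 2))) ^ n
        * (∑' x, a (k - n, x) ^ 2) ^ (1 / 2 : ℝ) * (∑' y, b (k, y) ^ 2) ^ (1 / 2 : ℝ) := by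
  have hnk : k - n ≤ k := by omega
  calc ∑' x, ∑' y, B (k - n, x) (k, y)
      ≤ ∑' x, ∑' y, ENNReal.ofReal (A * ((2 : ℝ) ^ (-(ε / 2))) ^ n)
          * (ENNReal.ofReal (((2 : ℝ) ^ k) ^ ε
              / (setDist (dyC (k - n) x) (dyC k y) + 2 ^ k) ^ ((d : ℝ) + ε))
            * μ (dyC (k - n) x) ^ (1 / 2 : ℝ) * ν (dyC k y) ^ (1 / 2 : ℝ)
            * a (k - n, x) * b (k, y)) := by
        gcongr with x y
        refine (hB (k - n, x) (k, y) hnk).trans_eq ?_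
        dsimp only
        rw [two_zpow_sub_sub_rpow, ENNReal.ofReal_mul (by positivity)]
        ring
    _ = ENNReal.ofReal (A * ((2 : ℝ) ^ (-(ε / 2))) ^ n)
          * ∑' x, ∑' y, ENNReal.ofReal (((2 : ℝ) ^ k) ^ ε
              / (setDist (dyC (k - n) x) (dyC k y) + 2 ^ k) ^ ((d : ℝ) + ε))
            * μ (dyC (k - n) x) ^ (1 / 2 : ℝ) * ν (dyC k y) ^ (1 / 2 : ℝ)
            * a (k - n, x) * b (k, y) := by
        simp_rw [ENNReal.tsum_mul_left]
    _ ≤ ENNReal.ofReal (A * ((2 : ℝ) ^ (-(ε / 2))) ^ n)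
          * (ENNReal.ofReal (3 ^ ((d : ℝ) + ε)) * N * (∑' x, a (k - n, x) ^ 2) ^ (1 / 2 : ℝ)
            * (∑' y, b (k, y) ^ 2) ^ (1 / 2 : ℝ)) := by
        gcongr
        exact tsum_tsum_ofReal_div_setDist_mul_le hε μ ν hnk (hK _ (by positivity)) _ _
    _ = _ := by
        rw [ENNReal.ofReal_mul hA, ENNReal.ofReal_mul hA, ENNReal.ofReal_pow (by positivity)]
        ring

theorem stmt18_general {d : ℕ} (ε A : ℝ) (hε : 0 < ε) (hA : 0 ≤ A) :
    ∃ c : ℝ, 0 < c ∧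
      ∀ (μ ν : Measure (Rd d)), IsLocallyFiniteMeasure μ → IsLocallyFiniteMeasure ν →
      ∀ (N : ℝ≥0∞) (a b : ℤ × (Fin d → ℤ) → ℝ≥0∞)
        (B : ℤ × (Fin d → ℤ) → ℤ × (Fin d → ℤ) → ℝ≥0∞),
        (∀ p q : ℤ × (Fin d → ℤ), p.1 ≤ q.1 →
          B p q ≤ ENNReal.ofReal
              (A * ((2 : ℝ) ^ (p.1 - q.1)) ^ (ε / 2)
                * (((2 : ℝ) ^ q.1) ^ ε
                    / (setDist (dyC p.1 p.2) (dyC q.1 q.2) + (2 : ℝ) ^ q.1) ^ ((d : ℝ) + ε)))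
            * μ (dyC p.1 p.2) ^ (1/2 : ℝ) * ν (dyC q.1 q.2) ^ (1/2 : ℝ) * a p * b q) →
        (∀ y : ℝ, 0 < y → ∀ φ ψ : Rd d → ℝ≥0∞, Measurable φ → Measurable ψ →
          (∫⁻ s, (∫⁻ t, ENNReal.ofReal (y ^ ε / (y + ‖t - s‖) ^ ((d : ℝ) + ε)) * φ t ∂μ)
              * ψ s ∂ν)
            ≤ N * (∫⁻ t, φ t ^ 2 ∂μ) ^ (1/2 : ℝ) * (∫⁻ s, ψ s ^ 2 ∂ν) ^ (1/2 : ℝ)) →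
        ∑' pq : {pq : (ℤ × (Fin d → ℤ)) × (ℤ × (Fin d → ℤ)) // pq.1.1 ≤ pq.2.1},
            B (pq : (ℤ × (Fin d → ℤ)) × (ℤ × (Fin d → ℤ))).1 (pq : (ℤ × (Fin d → ℤ)) × (ℤ × (Fin d → ℤ))).2
          ≤ ENNReal.ofReal c * N * (∑' p, a p ^ 2) ^ (1/2 : ℝ) * (∑' q, b q ^ 2) ^ (1/2 : ℝ) := by
  set ρ : ℝ := 2 ^ (-(ε / 2))
  have hρ : ρ < 1 := Real.rpow_lt_one_of_one_lt_of_neg (by norm_num) (by linarith)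
  have hρ' : 0 < 1 - ρ := sub_pos.2 hρ
  refine ⟨A * 3 ^ ((d : ℝ) + ε) * (1 - ρ)⁻¹ + 1, by positivity,
    fun μ ν _ _ N a b B hB hK => ?_⟩
  rw [tsum_subtype_fst_le_eq B]
  calc _ ≤ ENNReal.ofReal (A * 3 ^ ((d : ℝ) + ε)) * N * (1 - ENNReal.ofReal ρ)⁻¹
          * (∑' k, ∑' x, a (k, x) ^ 2) ^ (1 / 2 : ℝ) * (∑' k, ∑' y, b (k, y) ^ 2) ^ (1 / 2 : ℝ) :=
        tsum_tsum_le_of_le_geometric _ _ _ (tsum_tsum_le_of_pair_bound hε.le hA μ ν hB hK)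
    _ = ENNReal.ofReal (A * 3 ^ ((d : ℝ) + ε) * (1 - ρ)⁻¹) * N
          * (∑' p, a p ^ 2) ^ (1 / 2 : ℝ) * (∑' q, b q ^ 2) ^ (1 / 2 : ℝ) := by
        rw [ENNReal.tsum_prod', ENNReal.tsum_prod', ENNReal.ofReal_mul (p := A * _) (by positivity),
          ENNReal.ofReal_inv_of_pos hρ', ENNReal.ofReal_sub _ (by positivity), ENNReal.ofReal_one]
        ring
    _ ≤ _ := by gcongr; linarith

/-- Summation of the long-range interaction: if a (nonnegative) bilinear quantity
`B(I,J)` over pairs of dyadic cubes `I ∈ 𝒟^μ`, `J ∈ 𝒟^ν` with `ℓ(I) = 2^{-n} ℓ(J)`,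
`n ≥ 0`, satisfies
`B(I,J) ≤ A 2^{-nε/2} ℓ(J)^ε (dist(I,J)+ℓ(J))^{-(d+ε)} μ(I)^{1/2} ν(J)^{1/2} a_I b_J`,
where `a_I = ‖Δ_I^μ f‖` and `b_J = ‖Δ_J^ν g‖` satisfy `∑ a_I² ≤ ‖f‖²`, `∑ b_J² ≤ ‖g‖²`,
and the Poisson-type kernel operators with kernels `K_y(t,s) = y^ε (y+|t-s|)^{-(d+ε)}`
are bounded `L²(μ) → L²(ν)` with norm at most `N` uniformly in `y > 0`, then
`∑_{ℓ(I) ≤ ℓ(J)} B(I,J) ≤ c N (∑ a_I²)^{1/2} (∑ b_J²)^{1/2}` with `c = c(d,ε,A)`. -/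
theorem stmt18 {d : ℕ} (hd : 0 < d) (ε A : ℝ) (hε : 0 < ε) (hA : 0 ≤ A) :
    ∃ c : ℝ, 0 < c ∧
      ∀ (μ ν : Measure (Rd d)), IsLocallyFiniteMeasure μ → IsLocallyFiniteMeasure ν →
      ∀ (N : ℝ≥0∞) (a b : ℤ × (Fin d → ℤ) → ℝ≥0∞)
        (B : ℤ × (Fin d → ℤ) → ℤ × (Fin d → ℤ) → ℝ≥0∞),
        (∀ p q : ℤ × (Fin d → ℤ), p.1 ≤ q.1 →
          B p q ≤ ENNReal.ofReal
              (A * ((2 : ℝ) ^ (p.1 - q.1)) ^ (ε / 2)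
                * (((2 : ℝ) ^ q.1) ^ ε
                    / (setDist (dyC p.1 p.2) (dyC q.1 q.2) + (2 : ℝ) ^ q.1) ^ ((d : ℝ) + ε)))
            * μ (dyC p.1 p.2) ^ (1/2 : ℝ) * ν (dyC q.1 q.2) ^ (1/2 : ℝ) * a p * b q) →
        (∀ y : ℝ, 0 < y → ∀ φ ψ : Rd d → ℝ≥0∞, Measurable φ → Measurable ψ →
          (∫⁻ s, (∫⁻ t, ENNReal.ofReal (y ^ ε / (y + ‖t - s‖) ^ ((d : ℝ) + ε)) * φ t ∂μ)
              * ψ s ∂ν)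
            ≤ N * (∫⁻ t, φ t ^ 2 ∂μ) ^ (1/2 : ℝ) * (∫⁻ s, ψ s ^ 2 ∂ν) ^ (1/2 : ℝ)) →
        ∑' pq : {pq : (ℤ × (Fin d → ℤ)) × (ℤ × (Fin d → ℤ)) // pq.1.1 ≤ pq.2.1},
            B (pq : (ℤ × (Fin d → ℤ)) × (ℤ × (Fin d → ℤ))).1 (pq : (ℤ × (Fin d → ℤ)) × (ℤ × (Fin d → ℤ))).2
          ≤ ENNReal.ofReal c * N * (∑' p, a p ^ 2) ^ (1/2 : ℝ) * (∑' q, b q ^ 2) ^ (1/2 : ℝ) :=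
  stmt18_general ε A hε hA
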